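/- Let G be a unimodular locally compact group and K a compact open subgroup. If (π, H) is an irreducible unitary representation of G, then the Hecke algebra C_c(G, K) acts irreducibly on the space H^K of K-fixed vectors via π(f) = ∫_G f(g) π(g) dg, in the sense that H^K has no proper nonzero C_c(G,K)-invariant closed subspace. -/

import Mathlib

open MeasureTheory

/-- The subspace of vectors fixed by a subgroup `K` under a unitary representation. -/
def fixedSubmodule {G E : Type*} [Group G] [NormedAddCommGroup E]
    [InnerProductSpace ℂ E] (π : G →* (E ≃ₗᵢ[ℂ] E)) (K : Subgroup G) :
    Submodule ℂ E where
  carrier := {v | ∀ k ∈ K, π k v = v}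
  add_mem' := by
    intro a b ha hb k hk
    simp [map_add, ha k hk, hb k hk]
  zero_mem' := by intro k hk; simp
  smul_mem' := by
    intro c a ha k hk
    simp [_root_.map_smul, ha k hk]

/-!
Let `0 ≠ w ∈ W` and let `u ∈ H^K` be orthogonal to `W`. For `g ∈ G` the characteristic function
of the double coset `KgK` lies in `C_c(G, K)` (it is locally constant because `K` is open), and
the matrix coefficient `x ↦ ⟪u, π x w⟫` is constant on `KgK`, so
`0 = ⟪u, π(1_{KgK}) w⟫ = vol(KgK) ⟪u, π g w⟫` with `vol(KgK) > 0`. Thus `u` is orthogonal to the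
orbit of `w`, whose orthogonal complement is a closed invariant proper subspace, hence zero by
irreducibility. So `u = 0`, and `W`, being closed, is all of `H^K`.
-/

open Pointwise
open DoubleCoset (doubleCoset mem_doubleCoset mem_doubleCoset_self)

theorem Submodule.eq_of_le_of_orthogonal_inf_eq_bot {𝕜 E : Type*} [RCLike 𝕜]
    [NormedAddCommGroup E] [InnerProductSpace 𝕜 E] {W V : Submodule 𝕜 E}
    [W.HasOrthogonalProjection] (hWV : W ≤ V) (h : Wᗮ ⊓ V = ⊥) : W = V := by
  simpa [h] using sup_orthogonal_inf_of_hasOrthogonalProjection hWV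

section Group

variable {G : Type*} [Group G] {H K : Subgroup G} {g h k x : G}

theorem mul_mul_mem_doubleCoset_iff (hh : h ∈ H) (hk : k ∈ K) :
    h * x * k ∈ doubleCoset g H K ↔ x ∈ doubleCoset g H K := by
  simp only [mem_doubleCoset]
  constructor
  · rintro ⟨a, ha, b, hb, hx⟩
    refine ⟨h⁻¹ * a, H.mul_mem (H.inv_mem hh) ha, b * k⁻¹, K.mul_mem hb (K.inv_mem hk), ?_⟩
    rw [show x = h⁻¹ * (h * x * k) * k⁻¹ by group, hx]
    group
  · rintro ⟨a, ha, b, hb, rfl⟩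
    exact ⟨h * a, H.mul_mem hh ha, b * k, K.mul_mem hb hk, by group⟩

theorem indicator_doubleCoset_mul_mul {M : Type*} [Zero M] [One M] (hh : h ∈ H) (hk : k ∈ K) :
    (doubleCoset g H K).indicator (1 : G → M) (h * x * k) =
      (doubleCoset g H K).indicator 1 x :=
  open Classical in if_congr (mul_mul_mem_doubleCoset_iff hh hk) rfl rfl

end Group

section TopologicalGroup

variable {G : Type*} [Group G] [TopologicalSpace G]

theorem continuous_of_forall_mul_eq {X : Type*} [TopologicalSpace X] [SeparatelyContinuousMul G]
    {K : Subgroup G} (hK : IsOpen (K : Set G)) {f : G → X} (hf : ∀ x, ∀ k ∈ K, f (x * k) = f x) :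
    Continuous f :=
  IsLocallyConstant.continuous <| (IsLocallyConstant.iff_exists_open f).2 fun x =>
    ⟨x • (K : Set G), hK.leftCoset x, ⟨1, K.one_mem, mul_one x⟩,
      by rintro _ ⟨k, hk, rfl⟩; exact hf x k hk⟩

variable [IsTopologicalGroup G] {K : Subgroup G} {M : Type*} [Zero M] [One M]

theorem isOpen_doubleCoset (g : G) (H : Set G) {K : Set G} (hK : IsOpen K) :
    IsOpen (doubleCoset g H K) :=
  hK.mul_left

theorem isCompact_doubleCoset (g : G) {H K : Set G} (hH : IsCompact H) (hK : IsCompact K) :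
    IsCompact (doubleCoset g H K) :=
  (hH.mul isCompact_singleton).mul hK

theorem continuous_indicator_doubleCoset [TopologicalSpace M] (hK : IsOpen (K : Set G)) (g : G) :
    Continuous ((doubleCoset g K K).indicator (1 : G → M)) :=
  continuous_of_forall_mul_eq hK fun x k hk => by
    simpa using indicator_doubleCoset_mul_mul (M := M) (g := g) (x := x) K.one_mem hk

theorem hasCompactSupport_indicator_doubleCoset (hK : IsCompact (K : Set G)) (g : G) :
    HasCompactSupport ((doubleCoset g K K).indicator (1 : G → M)) :=
  (isCompact_doubleCoset g hK hK).closure_of_subset Set.support_indicator_subset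

end TopologicalGroup

section Representation

variable {G E : Type*} [Group G] [NormedAddCommGroup E] [InnerProductSpace ℂ E]
  (π : G →* (E ≃ₗᵢ[ℂ] E))

theorem inner_map_eq_of_mem_doubleCoset {K : Subgroup G} {u w : E}
    (hu : u ∈ fixedSubmodule π K) (hw : w ∈ fixedSubmodule π K) {g x : G}
    (hx : x ∈ doubleCoset g K K) : inner ℂ u (π x w) = inner ℂ u (π g w) := by
  obtain ⟨a, ha, b, hb, rfl⟩ := mem_doubleCoset.1 hx
  simp only [map_mul, LinearIsometryEquiv.coe_mul, Function.comp_apply]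
  rw [hw b hb, ← hu a ha, LinearIsometryEquiv.inner_map_map, hu a ha]

theorem eq_zero_of_forall_inner_map_eq_zero
    (hirr : ∀ F : Submodule ℂ E, IsClosed (F : Set E) →
      (∀ g : G, ∀ x ∈ F, π g x ∈ F) → F = ⊥ ∨ F = ⊤)
    {u w : E} (hw : w ≠ 0) (h : ∀ g, inner ℂ u (π g w) = 0) : u = 0 := by
  set F := (⨆ g, ℂ ∙ π g w)ᗮ
  have mem_F : ∀ x, x ∈ F ↔ ∀ g, inner ℂ (π g w) x = 0 := fun x => by
    simp only [F, ← Submodule.iInf_orthogonal, Submodule.mem_iInf,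
      Submodule.mem_orthogonal_singleton_iff_inner_right]
  have hF : ∀ g, ∀ x ∈ F, π g x ∈ F := fun g x hx => (mem_F _).2 fun h' => by
    rw [← mul_inv_cancel_left g h', map_mul, LinearIsometryEquiv.coe_mul, Function.comp_apply,
      LinearIsometryEquiv.inner_map_map]
    exact (mem_F x).1 hx _
  rcases hirr F (Submodule.isClosed_orthogonal _) hF with hbot | htop
  · exact (Submodule.mem_bot ℂ).1 <| hbot ▸ (mem_F u).2 fun g => inner_eq_zero_symm.1 (h g)
  · refine absurd ((mem_F w).1 (htop ▸ Submodule.mem_top) 1) ?_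
    simpa using hw

theorem inner_integral_indicator_doubleCoset_smul [TopologicalSpace G] [IsTopologicalGroup G]
    [MeasurableSpace G] [BorelSpace G] [CompleteSpace E] (μ : Measure G)
    [IsFiniteMeasureOnCompacts μ] {K : Subgroup G} (hKc : IsCompact (K : Set G))
    (hKo : IsOpen (K : Set G)) {u w : E} (hu : u ∈ fixedSubmodule π K)
    (hw : w ∈ fixedSubmodule π K) (hcont : Continuous fun g : G => π g w) (g : G) :
    inner ℂ u (∫ x, (doubleCoset g K K).indicator (1 : G → ℂ) x • π x w ∂μ) =
      μ.real (doubleCoset g K K) • inner ℂ u (π g w) := by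
  set S := doubleCoset g (K : Set G) K
  have hint : Integrable (fun x => S.indicator (1 : G → ℂ) x • π x w) μ :=
    ((continuous_indicator_doubleCoset hKo g).smul hcont).integrable_of_hasCompactSupport
      (hasCompactSupport_indicator_doubleCoset hKc g).smul_right
  have hS : MeasurableSet S := (isOpen_doubleCoset g _ hKo).measurableSet
  calc inner ℂ u (∫ x, S.indicator 1 x • π x w ∂μ)
      = ∫ x, S.indicator (fun x => inner ℂ u (π x w)) x ∂μ := by
        rw [← integral_inner hint]
        congr with x
        by_cases hx : x ∈ S <;> simp [hx]
    _ = ∫ x in S, inner ℂ u (π g w) ∂μ := by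
        rw [integral_indicator hS]
        exact setIntegral_congr_fun hS fun x hx => inner_map_eq_of_mem_doubleCoset π hu hw hx
    _ = μ.real S • inner ℂ u (π g w) := setIntegral_const _

end Representation

theorem stmt_17_general {G : Type*} [Group G] [TopologicalSpace G] [IsTopologicalGroup G]
    [MeasurableSpace G] [BorelSpace G]
    (μ : Measure G) [μ.IsHaarMeasure]
    (K : Subgroup G) (hKc : IsCompact (K : Set G)) (hKo : IsOpen (K : Set G))
    {E : Type*} [NormedAddCommGroup E] [InnerProductSpace ℂ E] [CompleteSpace E]
    (π : G →* (E ≃ₗᵢ[ℂ] E))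
    (hcont : ∀ v : E, Continuous fun g : G => π g v)
    (hirr : ∀ F : Submodule ℂ E, IsClosed (F : Set E) →
      (∀ g : G, ∀ x ∈ F, π g x ∈ F) → F = ⊥ ∨ F = ⊤) :
    ∀ W : Submodule ℂ E, IsClosed (W : Set E) → W ≤ fixedSubmodule π K →
      (∀ f : G → ℂ, Continuous f → HasCompactSupport f →
        (∀ k₁ ∈ K, ∀ k₂ ∈ K, ∀ g : G, f (k₁ * g * k₂) = f g) →
        ∀ v ∈ W, (∫ g : G, f g • (π g v) ∂μ) ∈ W) →
      W = ⊥ ∨ W = fixedSubmodule π K := by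
  intro W hWc hWK hWinv
  refine or_iff_not_imp_left.2 fun hW => ?_
  obtain ⟨w, hwW, hw0⟩ := W.exists_mem_ne_zero_of_ne_bot hW
  have : CompleteSpace W := hWc.completeSpace_coe
  refine Submodule.eq_of_le_of_orthogonal_inf_eq_bot hWK <| (Submodule.eq_bot_iff _).2 ?_
  rintro u ⟨huW, huK⟩
  refine eq_zero_of_forall_inner_map_eq_zero π hirr hw0 fun g => ?_
  have hvol : μ.real (doubleCoset g K K) ≠ 0 :=
    (measureReal_ne_zero_iff (isCompact_doubleCoset g hKc hKc).measure_lt_top.ne).2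
      ((isOpen_doubleCoset g _ hKo).measure_pos μ ⟨g, mem_doubleCoset_self K K g⟩).ne'
  have hmem := hWinv _ (continuous_indicator_doubleCoset hKo g)
    (hasCompactSupport_indicator_doubleCoset hKc g)
    (fun k₁ hk₁ k₂ hk₂ _ => indicator_doubleCoset_mul_mul hk₁ hk₂) w hwW
  have hcoeff := inner_integral_indicator_doubleCoset_smul π μ hKc hKo huK (hWK hwW) (hcont w) g
  rw [Submodule.inner_left_of_mem_orthogonal hmem huW] at hcoeff
  exact (smul_eq_zero.1 hcoeff.symm).resolve_left hvol

/-- Let G be a unimodular locally compact group with Haar measure μ and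
K a compact open subgroup. If (π, H) is an irreducible unitary representation of G,
then the Hecke algebra C_c(G, K) acts irreducibly on the space H^K of K-fixed vectors
via π(f)v = ∫ f(g) π(g)v dμ(g): every closed C_c(G,K)-invariant subspace of H^K is
trivial. -/
theorem stmt_17 {G : Type*} [Group G] [TopologicalSpace G] [IsTopologicalGroup G]
    [LocallyCompactSpace G] [MeasurableSpace G] [BorelSpace G]
    (μ : Measure G) [μ.IsHaarMeasure] [μ.IsMulRightInvariant]
    (K : Subgroup G) (hKc : IsCompact (K : Set G)) (hKo : IsOpen (K : Set G))
    {E : Type*} [NormedAddCommGroup E] [InnerProductSpace ℂ E] [CompleteSpace E]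
    (π : G →* (E ≃ₗᵢ[ℂ] E))
    (hcont : ∀ v : E, Continuous fun g : G => π g v)
    (hirr : ∀ F : Submodule ℂ E, IsClosed (F : Set E) →
      (∀ g : G, ∀ x ∈ F, π g x ∈ F) → F = ⊥ ∨ F = ⊤) :
    ∀ W : Submodule ℂ E, IsClosed (W : Set E) → W ≤ fixedSubmodule π K →
      (∀ f : G → ℂ, Continuous f → HasCompactSupport f →
        (∀ k₁ ∈ K, ∀ k₂ ∈ K, ∀ g : G, f (k₁ * g * k₂) = f g) →
        ∀ v ∈ W, (∫ g : G, f g • (π g v) ∂μ) ∈ W) →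
      W = ⊥ ∨ W = fixedSubmodule π K :=
  stmt_17_general μ K hKc hKo π hcont hirr
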